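/- Let α_1 ∈ (1/2, 1) be irrational with continued fraction expansion [0; a_1, a_2, …] (so a_1 = 1), suppose a_i > 1 for all i ≥ 2, let (q_k)_{k≥0} be the convergent denominators of α_1, and set α = (α_1, 1 − α_1) ∈ ℝ². Fix 1 ≤ q ≤ ∞. Then for every i ≥ 1 and every N with 2q_{i+1} + 1 ≤ N ≤ q_{i+2}, one has h_j(N) = h_1(N) for all j = 1, 2, …, N. -/

import Mathlib

/-!
Since `1 - α₁ ≡ -α₁ (mod 1)`, both coordinates of `z_a - z_b` lie at distance `‖(a - b)α₁‖`
from the nearest integer, so `d_q(z_a, z_b) = c_q ‖(a - b)α₁‖` for a constant `c_q > 0`.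
By the best approximation property of convergent denominators, `‖q_{i+1}α₁‖ < ‖kα₁‖` for all
`1 ≤ k < q_{i+2}` with `k ≠ q_{i+1}`. Every index gap in `S_N` is below `N ≤ q_{i+2}`, so the
nearest neighbours of `z_j` are exactly the points `z_{j ± q_{i+1}}` in `S_N`, and there is one
since `N ≥ 2q_{i+1}`. Hence `h_j(N) = q_{i+1}` for every `j`.

The best approximation property: `(k, p) = x (q_n, p_n) + y (q_{n+1}, p_{n+1})` with integers
`x, y` because the convergent matrix is unimodular, whence `kα - p = ±(x δ_n - y δ_{n+1})` with
`δ_n = |q_n α - p_n| > 0`; and `1 ≤ k < q_{n+1}`, `k ≠ q_n` forces `x, y` to have opposite signs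
or `y = 0, x ≥ 2`.
-/

open scoped BigOperators ENNReal NNReal

/-- Distance from a real number to the nearest integer (the torus norm on ℝ/ℤ). -/
noncomputable def nint (t : ℝ) : ℝ := |t - round t|

/-- The `L_q` distance (for `1 ≤ q ≤ ∞`) between two points of the torus `ℝ^d/ℤ^d`,
computed on representatives in `ℝ^d`. -/
noncomputable def lqDist (q : ℝ≥0∞) {d : ℕ} (x y : Fin d → ℝ) : ℝ :=
  if q = ⊤ then ⨆ i, nint (x i - y i)
  else (∑ i, nint (x i - y i) ^ q.toReal) ^ (1 / q.toReal)

/-- The `n`-th point of the `d`-dimensional Kronecker sequence `z_n = nα + ℤ^d`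
(as a representative in `ℝ^d`). -/
noncomputable def kron {d : ℕ} (α : Fin d → ℝ) (n : ℕ) : Fin d → ℝ :=
  fun c => (n : ℝ) * α c

/-- `L_q`-distance on the torus between the `i`-th and `j`-th points of the
Kronecker sequence of `α`. -/
noncomputable def kronDist (q : ℝ≥0∞) {d : ℕ} (α : Fin d → ℝ) (i j : ℕ) : ℝ :=
  lqDist q (kron α i) (kron α j)

/-- The index `j ∈ {1, …, N} \ {i}` of the nearest neighbor of `z_i` in
`S_N = {z_1, …, z_N}` w.r.t. the `L_q` torus metric; ties are broken by taking
the largest such index. -/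
noncomputable def nnIndex (q : ℝ≥0∞) {d : ℕ} (α : Fin d → ℝ) (N i : ℕ) : ℕ :=
  sSup {j : ℕ | j ∈ Finset.Icc 1 N ∧ j ≠ i ∧
    ∀ m ∈ Finset.Icc 1 N, m ≠ i → kronDist q α i j ≤ kronDist q α i m}

/-- `h_i(N) = |j - i|` where `z_j` is the nearest neighbor of `z_i` in `S_N`:
the counting-metric distance of `z_i` to its nearest neighbor. -/
noncomputable def hFun (q : ℝ≥0∞) {d : ℕ} (α : Fin d → ℝ) (N i : ℕ) : ℕ :=
  Nat.dist (nnIndex q α N i) i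

/-- `g_N(α, ℤ^d, ‖·‖_q)`: the number of distinct nearest neighbor distances
among `d_q(z_i, nn_1(z_i))`, `i = 1, …, N`. -/
noncomputable def gN (q : ℝ≥0∞) {d : ℕ} (α : Fin d → ℝ) (N : ℕ) : ℕ :=
  ((Finset.Icc 1 N).image (fun i => kronDist q α i (nnIndex q α N i))).card

/-- The Gauss map `x ↦ {1/x}` generating the continued fraction expansion. -/
noncomputable def gaussMap (x : ℝ) : ℝ := Int.fract x⁻¹

/-- The partial quotients of the continued fraction expansion `[0; a_1, a_2, …]`
of an irrational `α ∈ (0,1)`: `a_n = ⌊1 / G^[n-1](α)⌋` (with `a_0 = 0`). -/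
noncomputable def cfA (α : ℝ) : ℕ → ℕ
  | 0 => 0
  | n + 1 => (⌊(gaussMap^[n] α)⁻¹⌋).toNat

/-- The denominators of the convergents of the continued fraction of `α`:
`q_0 = 1`, `q_1 = a_1`, `q_n = a_n q_{n-1} + q_{n-2}`. -/
noncomputable def cfQ (α : ℝ) : ℕ → ℕ
  | 0 => 1
  | 1 => cfA α 1
  | n + 2 => cfA α (n + 2) * cfQ α (n + 1) + cfQ α n


open Finset

lemma nint_le (t : ℝ) (m : ℤ) : nint t ≤ |t - m| := round_le t m

lemma nint_add_intCast (t : ℝ) (m : ℤ) : nint (t + m) = nint t := by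
  simp only [nint, round_add_intCast, Int.cast_add, add_sub_add_right_eq_sub]

lemma nint_neg (t : ℝ) : nint (-t) = nint t := by
  have key : ∀ s : ℝ, nint (-s) ≤ nint s := fun s =>
    (nint_le (-s) (-round s)).trans_eq <| by
      rw [Int.cast_neg, ← abs_neg, nint]; ring_nf
  exact le_antisymm (key t) (by simpa using key (-t))

lemma nint_natCast_sub_mul (a b : ℕ) (t : ℝ) :
    nint (((a : ℝ) - b) * t) = nint (Nat.dist a b * t) := by
  rcases le_total a b with h | h
  · rw [Nat.dist_eq_sub_of_le h, Nat.cast_sub h, ← nint_neg]; ring_nf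
  · rw [Nat.dist_eq_sub_of_le_right h, Nat.cast_sub h]

noncomputable def cfP (α : ℝ) : ℕ → ℕ
  | 0 => 0
  | 1 => 1
  | n + 2 => cfA α (n + 2) * cfP α (n + 1) + cfP α n

-- `|q_n α - p_n|` (see `cfQ_mul_sub_cfP`), as a product of iterates of the Gauss map.
noncomputable def cfErr (α : ℝ) (n : ℕ) : ℝ := ∏ k ∈ range (n + 1), gaussMap^[k] α

lemma cfErr_succ (α : ℝ) (n : ℕ) : cfErr α (n + 1) = cfErr α n * gaussMap^[n + 1] α :=
  prod_range_succ _ _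

lemma Irrational.gaussMap {x : ℝ} (hx : Irrational x) : Irrational (gaussMap x) :=
  hx.inv.sub_intCast _

lemma gaussMap_mem_Ioo {x : ℝ} (hx : Irrational x) : gaussMap x ∈ Set.Ioo 0 1 :=
  ⟨(Int.fract_nonneg _).lt_of_ne hx.gaussMap.ne_zero.symm, Int.fract_lt_one _⟩

lemma cfP_mul_cfQ_sub_cfP_mul_cfQ (α : ℝ) (n : ℕ) :
    (cfP α (n + 1) : ℤ) * cfQ α n - cfP α n * cfQ α (n + 1) = (-1) ^ n := by
  induction n with
  | zero => simp [cfP, cfQ]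
  | succ n ih =>
    simp only [cfP, cfQ, Nat.cast_add, Nat.cast_mul]
    linear_combination (-1 : ℤ) * ih

lemma exists_cfQ_cfP_combination (α : ℝ) (n : ℕ) (k p : ℤ) :
    ∃ x y : ℤ, x * cfQ α n + y * cfQ α (n + 1) = k ∧ x * cfP α n + y * cfP α (n + 1) = p := by
  have hdet := cfP_mul_cfQ_sub_cfP_mul_cfQ α n
  have hsq : ((-1 : ℤ) ^ n) ^ 2 = 1 := by rw [← pow_mul, mul_comm, pow_mul]; norm_num
  refine ⟨(-1) ^ n * (k * cfP α (n + 1) - p * cfQ α (n + 1)),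
    (-1) ^ n * (p * cfQ α n - k * cfP α n), ?_, ?_⟩
  · linear_combination ((-1) ^ n * k) * hdet + k * hsq
  · linear_combination ((-1) ^ n * p) * hdet + p * hsq

lemma eq_zero_and_two_le_or_mul_neg {a b k x y : ℤ} (ha : 0 < a) (hk0 : 0 < k) (hkb : k < b)
    (hka : k ≠ a) (h : x * a + y * b = k) : (y = 0 ∧ 2 ≤ x) ∨ x * y < 0 := by
  rcases lt_trichotomy y 0 with hy | rfl | hy
  · rcases lt_trichotomy x 0 with hx | rfl | hx
    · nlinarith
    · nlinarith
    · right; nlinarith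
  · refine Or.inl ⟨rfl, ?_⟩
    have : 0 < x := by nlinarith
    have : x ≠ 1 := by rintro rfl; omega
    omega
  · rcases lt_trichotomy x 0 with hx | rfl | hx
    · right; nlinarith
    · nlinarith
    · nlinarith

lemma lt_abs_mul_sub_mul {B B' : ℝ} {x y : ℤ} (hB : 0 < B) (hB' : 0 < B')
    (h : (y = 0 ∧ 2 ≤ x) ∨ x * y < 0) : B < |x * B - y * B'| := by
  rcases h with ⟨rfl, hx⟩ | hxy
  · have : (2 : ℝ) ≤ x := by exact_mod_cast hx
    rw [Int.cast_zero, zero_mul, sub_zero, abs_of_pos (by positivity)]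
    nlinarith
  · rcases mul_neg_iff.mp hxy with ⟨hx, hy⟩ | ⟨hx, hy⟩
    · have hx' : (1 : ℝ) ≤ x := by exact_mod_cast hx
      have hy' : (y : ℝ) ≤ -1 := by exact_mod_cast (show y ≤ -1 by omega)
      rw [abs_of_pos (by nlinarith)]
      nlinarith
    · have hx' : (x : ℝ) ≤ -1 := by exact_mod_cast (show x ≤ -1 by omega)
      have hy' : (1 : ℝ) ≤ y := by exact_mod_cast hy
      rw [abs_of_neg (by nlinarith)]
      nlinarith

section ContinuedFraction

variable {α : ℝ} (hα : α ∈ Set.Ioo 0 1) (hirr : Irrational α)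
include hirr

lemma irrational_gaussMap_iterate (n : ℕ) : Irrational (gaussMap^[n] α) := by
  induction n with
  | zero => exact hirr
  | succ n ih => rw [Function.iterate_succ_apply']; exact ih.gaussMap

include hα

lemma gaussMap_iterate_mem_Ioo : ∀ n, gaussMap^[n] α ∈ Set.Ioo 0 1
  | 0 => hα
  | n + 1 => by
    rw [Function.iterate_succ_apply']
    exact gaussMap_mem_Ioo (irrational_gaussMap_iterate hirr n)

lemma one_le_floor_inv_gaussMap_iterate (n : ℕ) : 1 ≤ ⌊(gaussMap^[n] α)⁻¹⌋ := by
  obtain ⟨hpos, hlt⟩ := gaussMap_iterate_mem_Ioo hα hirr n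
  exact Int.le_floor.mpr (by exact_mod_cast ((one_lt_inv₀ hpos).mpr hlt).le)

lemma cfA_succ_cast (n : ℕ) : (cfA α (n + 1) : ℝ) = ⌊(gaussMap^[n] α)⁻¹⌋ := by
  rw [cfA, ← Int.cast_natCast,
    Int.toNat_of_nonneg (zero_le_one.trans (one_le_floor_inv_gaussMap_iterate hα hirr n))]

lemma one_le_cfA_succ (n : ℕ) : 1 ≤ cfA α (n + 1) := by
  have := one_le_floor_inv_gaussMap_iterate hα hirr n
  rw [cfA]; omega

lemma gaussMap_iterate_succ (n : ℕ) :
    gaussMap^[n + 1] α = (gaussMap^[n] α)⁻¹ - cfA α (n + 1) := by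
  rw [Function.iterate_succ_apply', cfA_succ_cast hα hirr]; rfl

lemma one_le_cfQ : ∀ n, 1 ≤ cfQ α n
  | 0 => le_rfl
  | 1 => one_le_cfA_succ hα hirr 0
  | n + 2 => by
    have := one_le_cfQ (n + 1)
    have := one_le_cfA_succ hα hirr (n + 1)
    rw [cfQ]; nlinarith

lemma cfErr_pos (n : ℕ) : 0 < cfErr α n :=
  prod_pos fun k _ => (gaussMap_iterate_mem_Ioo hα hirr k).1

lemma cfErr_add_two (n : ℕ) :
    cfErr α (n + 2) = cfErr α n - cfA α (n + 2) * cfErr α (n + 1) := by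
  have hne := (gaussMap_iterate_mem_Ioo hα hirr (n + 1)).1.ne'
  rw [cfErr_succ, cfErr_succ, gaussMap_iterate_succ hα hirr (n + 1)]
  field_simp

lemma cfQ_mul_sub_cfP (n : ℕ) : cfQ α n * α - cfP α n = (-1) ^ n * cfErr α n := by
  induction n using Nat.twoStepInduction with
  | zero => simp [cfQ, cfP, cfErr]
  | one =>
    have hne := hα.1.ne'
    simp only [cfQ, cfP, cfErr, prod_range_succ, range_zero, prod_empty,
      gaussMap_iterate_succ hα hirr 0, Function.iterate_zero_apply, Nat.cast_one, zero_add]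
    field_simp
    ring
  | more n ih ih1 =>
    simp only [cfQ, cfP, Nat.cast_add, Nat.cast_mul, cfErr_add_two hα hirr n]
    linear_combination (cfA α (n + 2) : ℝ) * ih1 + ih

lemma cfErr_lt_abs_mul_sub (n : ℕ) (k p : ℤ) (hk0 : 0 < k) (hk : k < cfQ α (n + 1))
    (hkq : k ≠ cfQ α n) : cfErr α n < |k * α - p| := by
  obtain ⟨x, y, hxk, hyp⟩ := exists_cfQ_cfP_combination α n k p
  have hsplit : k * α - p = (-1) ^ n * (x * cfErr α n - y * cfErr α (n + 1)) := by
    rw [← hxk, ← hyp]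
    push_cast
    linear_combination (x : ℝ) * cfQ_mul_sub_cfP hα hirr n + y * cfQ_mul_sub_cfP hα hirr (n + 1)
  rw [hsplit, abs_mul, abs_pow, abs_neg, abs_one, one_pow, one_mul]
  exact lt_abs_mul_sub_mul (cfErr_pos hα hirr n) (cfErr_pos hα hirr (n + 1))
    (eq_zero_and_two_le_or_mul_neg (by exact_mod_cast one_le_cfQ hα hirr n) hk0 hk hkq hxk)

lemma nint_cfQ_mul_lt (n k : ℕ) (hk0 : 0 < k) (hk : k < cfQ α (n + 1)) (hkq : k ≠ cfQ α n) :
    nint (cfQ α n * α) < nint (k * α) :=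
  calc nint (cfQ α n * α)
      ≤ |cfQ α n * α - cfP α n| := by exact_mod_cast nint_le _ (cfP α n)
    _ = cfErr α n := by
      rw [cfQ_mul_sub_cfP hα hirr, abs_mul, abs_pow, abs_neg, abs_one, one_pow, one_mul,
        abs_of_pos (cfErr_pos hα hirr n)]
    _ < |k * α - round (k * α)| := by
      exact_mod_cast cfErr_lt_abs_mul_sub hα hirr n k (round (k * α)) (by exact_mod_cast hk0)
        (by exact_mod_cast hk) (by exact_mod_cast hkq)

end ContinuedFraction

-- The `L_q` norm of the all-ones vector of `ℝ^d`.
noncomputable def lqScale (q : ℝ≥0∞) (d : ℕ) : ℝ := if q = ⊤ then 1 else (d : ℝ) ^ (1 / q.toReal)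

lemma lqScale_pos (q : ℝ≥0∞) {d : ℕ} (hd : d ≠ 0) : 0 < lqScale q d := by
  unfold lqScale
  split_ifs
  · exact one_pos
  · exact Real.rpow_pos_of_pos (by positivity) _

lemma lqDist_eq_of_forall_nint_eq {q : ℝ≥0∞} (hq : q ≠ 0) {d : ℕ} [NeZero d]
    {x y : Fin d → ℝ} {g : ℝ} (hg : ∀ c, nint (x c - y c) = g) :
    lqDist q x y = lqScale q d * g := by
  simp only [lqDist, lqScale, hg]
  split_ifs with htop
  · rw [ciSup_const, one_mul]
  · have hg0 : 0 ≤ g := hg 0 ▸ abs_nonneg _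
    have hq' : q.toReal ≠ 0 := ENNReal.toReal_ne_zero.mpr ⟨hq, htop⟩
    rw [sum_const, card_univ, Fintype.card_fin, nsmul_eq_mul,
      Real.mul_rpow (Nat.cast_nonneg _) (Real.rpow_nonneg hg0 _), one_div,
      Real.rpow_rpow_inv hg0 hq']

lemma kronDist_eq (q : ℝ≥0∞) (hq : q ≠ 0) (α1 : ℝ) (a b : ℕ) :
    kronDist q ![α1, 1 - α1] a b = lqScale q 2 * nint (Nat.dist a b * α1) := by
  refine lqDist_eq_of_forall_nint_eq hq fun c => ?_
  rw [← nint_natCast_sub_mul]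
  fin_cases c
  · simp [kron]; ring_nf
  · have : (a : ℝ) * (1 - α1) - b * (1 - α1) = -(((a : ℝ) - b) * α1) + ((a - b : ℤ) : ℝ) := by
      push_cast; ring
    simp only [kron, Fin.mk_one, Matrix.cons_val_one, Matrix.cons_val_fin_one]
    rw [this, nint_add_intCast, nint_neg]

lemma hFun_eq_of_kronDist_eq {d : ℕ} (q : ℝ≥0∞) (α : Fin d → ℝ) (f : ℕ → ℝ)
    (hf : ∀ a b, kronDist q α a b = f (Nat.dist a b)) {N Q : ℕ} (hQ : 0 < Q) (hQN : 2 * Q ≤ N)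
    (hmin : ∀ k, 0 < k → k < N → k ≠ Q → f Q < f k) :
    ∀ j ∈ Icc 1 N, hFun q α N j = Q := by
  intro j hj
  have hdist (a b : ℕ) : Nat.dist a b = a - b + (b - a) := rfl
  have hpos (m : ℕ) (hm : m ≠ j) : 0 < Nat.dist j m := by rw [hdist]; omega
  have hlt (m : ℕ) (hm : m ∈ Icc 1 N) : Nat.dist j m < N := by
    rw [mem_Icc] at hj hm; rw [hdist]; omega
  have hne (m : ℕ) (hm : Nat.dist j m = Q) : m ≠ j := by
    rintro rfl; rw [Nat.dist_self] at hm; omega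
  have hmin_le (m m' : ℕ) (hm : Nat.dist j m = Q) (hm' : m' ∈ Icc 1 N) (hm'j : m' ≠ j) :
      f (Nat.dist j m) ≤ f (Nat.dist j m') := by
    rw [hm]
    rcases eq_or_ne (Nat.dist j m') Q with h | h
    · rw [h]
    · exact (hmin _ (hpos m' hm'j) (hlt m' hm') h).le
  rw [mem_Icc] at hj
  set m₀ := if j + Q ≤ N then j + Q else j - Q with hm₀
  have hm₀_mem : m₀ ∈ Icc 1 N ∧ Nat.dist j m₀ = Q := by
    rw [mem_Icc, hdist, hm₀]; split_ifs <;> omega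
  have hS : {m | m ∈ Icc 1 N ∧ m ≠ j ∧
      ∀ m' ∈ Icc 1 N, m' ≠ j → kronDist q α j m ≤ kronDist q α j m'} =
      {m | m ∈ Icc 1 N ∧ Nat.dist j m = Q} := by
    ext m
    simp only [Set.mem_ofPred_eq, hf]
    constructor
    · rintro ⟨hm, hmj, hle⟩
      refine ⟨hm, by_contra fun hQm => ?_⟩
      exact (hle m₀ hm₀_mem.1 (hne m₀ hm₀_mem.2)).not_gt
        (hm₀_mem.2 ▸ hmin _ (hpos m hmj) (hlt m hm) hQm)
    · rintro ⟨hm, hd⟩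
      exact ⟨hm, hne m hd, fun m' hm' hm'j => hmin_le m m' hd hm' hm'j⟩
  have hgreatest : IsGreatest {m | m ∈ Icc 1 N ∧ Nat.dist j m = Q} m₀ := by
    refine ⟨hm₀_mem, fun m ⟨hm, hd⟩ => ?_⟩
    rw [mem_Icc] at hm
    rw [hdist] at hd
    rw [hm₀]; split_ifs <;> omega
  rw [hFun, nnIndex, hS, hgreatest.csSup_eq, hdist, hm₀]
  split_ifs <;> omega

theorem statement13_general (α1 : ℝ) (hmem : α1 ∈ Set.Ioo (1/2 : ℝ) 1) (hirr : Irrational α1)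
    (q : ℝ≥0∞) (hq : 1 ≤ q)
    (i : ℕ) (N : ℕ)
    (hN1 : 2 * cfQ α1 (i + 1) + 1 ≤ N) (hN2 : N ≤ cfQ α1 (i + 2)) :
    ∀ j, 1 ≤ j → j ≤ N → hFun q ![α1, 1 - α1] N j = hFun q ![α1, 1 - α1] N 1 := by
  have hα : α1 ∈ Set.Ioo 0 1 := ⟨by linarith [hmem.1], hmem.2⟩
  have hq0 : q ≠ 0 := (zero_lt_one.trans_le hq).ne'
  have hgap (k : ℕ) (hk0 : 0 < k) (hkN : k < N) (hkQ : k ≠ cfQ α1 (i + 1)) :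
      lqScale q 2 * nint (cfQ α1 (i + 1) * α1) < lqScale q 2 * nint (k * α1) :=
    mul_lt_mul_of_pos_left (nint_cfQ_mul_lt hα hirr (i + 1) k hk0 (hkN.trans_le hN2) hkQ)
      (lqScale_pos q two_ne_zero)
  have hFun_eq := hFun_eq_of_kronDist_eq q ![α1, 1 - α1] (fun k => lqScale q 2 * nint (k * α1))
    (kronDist_eq q hq0 α1)
    (one_le_cfQ hα hirr (i + 1)) (by omega) hgap
  intro j hj1 hjN
  rw [hFun_eq j (mem_Icc.mpr ⟨hj1, hjN⟩), hFun_eq 1 (mem_Icc.mpr ⟨le_rfl, by omega⟩)]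

/-- For irrational `α_1 ∈ (1/2, 1)` with partial quotients `a_i > 1` for all
`i ≥ 2`, convergent denominators `(q_k)`, `α = (α_1, 1 - α_1)`, and `1 ≤ q ≤ ∞`: for every
`i ≥ 1` and every `N` with `2q_{i+1} + 1 ≤ N ≤ q_{i+2}`, one has `h_j(N) = h_1(N)` for all
`j = 1, …, N`. -/
theorem statement13 (α1 : ℝ) (hmem : α1 ∈ Set.Ioo (1/2 : ℝ) 1) (hirr : Irrational α1)
    (ha : ∀ i, 2 ≤ i → 1 < cfA α1 i) (q : ℝ≥0∞) (hq : 1 ≤ q)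
    (i : ℕ) (hi : 1 ≤ i) (N : ℕ)
    (hN1 : 2 * cfQ α1 (i + 1) + 1 ≤ N) (hN2 : N ≤ cfQ α1 (i + 2)) :
    ∀ j, 1 ≤ j → j ≤ N → hFun q ![α1, 1 - α1] N j = hFun q ![α1, 1 - α1] N 1 :=
  statement13_general α1 hmem hirr q hq i N hN1 hN2
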